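/- arXiv:1112.3254 — 3 statements merged into one kernel-verified Lean document; each statement's English description precedes it below -/
import Mathlib

section
/- Let G be a finite simple graph with a VPT-representation ⟨P,T⟩, let C be a clique of G, and let q be a vertex of T such that C = C_q. Then: (i) for every vertex v of the branch graph B(G/C), the path P_v is entirely contained in some branch of T at q; and (ii) if v and w are adjacent in B(G/C), then P_v and P_w are not contained in the same branch of T at q. -/
open SimpleGraph

/-- `S` induces a path (a nonempty connected subgraph with maximum degree at most 2,
i.e. a subtree which is a path when `T` is a tree) in the graph `T`. -/
def IsPathSet {W : Type*} (T : SimpleGraph W) (S : Set W) : Prop :=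
  S.Nonempty ∧
  (∀ x ∈ S, ∀ y ∈ S, ∃ p : T.Walk x y, ∀ z ∈ p.support, z ∈ S) ∧
  (∀ x ∈ S, (T.neighborSet x ∩ S).ncard ≤ 2)

/-- A VPT-representation of `G` on host tree `T`: a family of paths of the tree `T`,
one for each vertex of `G`, such that two distinct vertices of `G` are adjacent iff
the corresponding paths share a vertex. -/
structure VPTRep {V W : Type*} (G : SimpleGraph V) (T : SimpleGraph W) where
  tree : T.IsTree
  path : V → Set W
  isPath : ∀ v, IsPathSet T (path v)
  adj_iff : ∀ u v : V, u ≠ v → (G.Adj u v ↔ (path u ∩ path v).Nonempty)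

/-- `G` is a VPT graph: it has a VPT-representation on some finite host tree. -/
def IsVPT {V : Type*} (G : SimpleGraph V) : Prop :=
  ∃ (n : ℕ) (T : SimpleGraph (Fin n)), Nonempty (VPTRep G T)

/-- `G` belongs to the class [h,2,1]: it has a VPT-representation whose host tree has
maximum degree at most `h`. -/
def MemH21 {V : Type*} (G : SimpleGraph V) (h : ℕ) : Prop :=
  ∃ (n : ℕ) (T : SimpleGraph (Fin n)) (_ : VPTRep G T),
    ∀ x : Fin n, (T.neighborSet x).ncard ≤ h

/-- `C` is a clique of `G`: a maximal set of pairwise adjacent vertices. -/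
def IsMaxClique {V : Type*} (G : SimpleGraph V) (C : Set V) : Prop :=
  G.IsClique C ∧ ∀ D, G.IsClique D → C ⊆ D → D = C

/-- The branch graph `B(G/C)`, as a graph on the vertex set of `G`; its relevant
vertices are those of `branchVerts G C`, all others are isolated. -/
def branchGraph {V : Type*} (G : SimpleGraph V) (C : Set V) : SimpleGraph V where
  Adj v w := v ∉ C ∧ w ∉ C ∧ v ≠ w ∧ ¬ G.Adj v w ∧
    (∃ u ∈ C, G.Adj u v ∧ G.Adj u w) ∧
    (∃ v' ∈ C, G.Adj v' v ∧ ¬ G.Adj v' w) ∧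
    (∃ w' ∈ C, G.Adj w' w ∧ ¬ G.Adj w' v)
  symm := by
    constructor
    rintro v w ⟨h1, h2, h3, h4, ⟨u, hu, hu1, hu2⟩, ⟨v', hv', hv1, hv2⟩, ⟨w', hw', hw1, hw2⟩⟩
    exact ⟨h2, h1, h3.symm, fun hadj => h4 hadj.symm, ⟨u, hu, hu2, hu1⟩,
      ⟨w', hw', hw1, hw2⟩, ⟨v', hv', hv1, hv2⟩⟩
  loopless := by constructor; rintro v ⟨_, _, h, _⟩; exact h rfl

/-- The vertex set of the branch graph `B(G/C)`: vertices outside `C` adjacent to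
some vertex of `C`. -/
def branchVerts {V : Type*} (G : SimpleGraph V) (C : Set V) : Set V :=
  {v | v ∉ C ∧ ∃ u ∈ C, G.Adj u v}

/-- `B` is a branch of `T` at `q`: a connected component of `T - q`, i.e. the set of
vertices reachable from some neighbor `y` of `q` by a walk avoiding `q`. -/
def BranchAt {W : Type*} (T : SimpleGraph W) (q : W) (B : Set W) : Prop :=
  ∃ y, T.Adj q y ∧ B = {x | ∃ p : T.Walk y x, q ∉ p.support}

/-- `(S, K)` is a split partition of `G`: `S` is a stable set, `K` is a complete set,
and they partition the vertices. -/
def IsSplitPartition {V : Type*} (G : SimpleGraph V) (S K : Set V) : Prop :=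
  (∀ v, v ∈ S ∨ v ∈ K) ∧ Disjoint S K ∧
  (∀ a ∈ S, ∀ b ∈ S, ¬ G.Adj a b) ∧ G.IsClique K

open Walk

/-!
A path avoiding `q` is a connected set of `T - q`, hence lies in one branch. For (ii),
suppose `P_v` and `P_w` lie in the branch at the neighbour `y` of `q`, and let `u ∈ C` meet
`P_v` at `a` and `P_w` at `b`. The tree paths from `q` to `a` and to `b` both run inside
`P_u` through `y`; since `q` already uses one of the two `P_u`-neighbours of `y`, one of
these paths contains the other, say `a` lies on the tree path from `q` to `b`. For `w' ∈ C`
adjacent to `w`, that tree path is covered by `P_{w'} ∪ P_w`, so `a` lies in `P_{w'}` or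
`P_w`, i.e. `v` is adjacent to `w'` or to `w`, contradicting `vw ∈ B(G/C)`.
-/

namespace SimpleGraph

variable {W : Type*} {T : SimpleGraph W}

lemma IsAcyclic.support_subset_of_isPath (hT : T.IsAcyclic) {x y : W} {p : T.Walk x y}
    (hp : p.IsPath) (r : T.Walk x y) : p.support ⊆ r.support := by
  classical
  have hpr : p = r.bypass :=
    congrArg Subtype.val ((hT.subsingleton_path x y).elim ⟨p, hp⟩ ⟨_, r.bypass_isPath⟩)
  exact hpr ▸ r.support_bypass_subset_support

/-- At `y`, the edge back to `q` leaves room in `S` for only one way forward. -/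
lemma Walk.mem_support_or_mem_support_of_cons [Finite W] {S : Set W}
    (hdeg : ∀ x ∈ S, (T.neighborSet x ∩ S).ncard ≤ 2) {q y a b : W} (h : T.Adj q y)
    (p₁ : T.Walk y a) (p₂ : T.Walk y b) (hp₁ : (cons h p₁).IsPath) (hp₂ : (cons h p₂).IsPath)
    (hS₁ : ∀ z ∈ (cons h p₁).support, z ∈ S) (hS₂ : ∀ z ∈ (cons h p₂).support, z ∈ S) :
    a ∈ p₂.support ∨ b ∈ p₁.support := by
  induction p₁ generalizing q with
  | nil => exact Or.inl p₂.start_mem_support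
  | @cons y y₁ a h₁ p₁ ih =>
    cases p₂ with
    | nil => exact Or.inr (start_mem_support _)
    | @cons _ y₂ _ h₂ p₂ =>
      by_cases hy : y₁ = y₂
      · subst hy
        exact (ih h₁ p₂ hp₁.tail hp₂.tail (fun z hz => hS₁ z (List.mem_cons_of_mem _ hz))
          (fun z hz => hS₂ z (List.mem_cons_of_mem _ hz))).imp
          (fun h' => by simp [h']) (fun h' => by simp [h'])
      · exfalso
        have hqy₁ : q ≠ y₁ := by
          rintro rfl; exact ((cons_isPath_iff _ _).mp hp₁).2 (by simp)
        have hqy₂ : q ≠ y₂ := by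
          rintro rfl; exact ((cons_isPath_iff _ _).mp hp₂).2 (by simp)
        have hsub : ({q, y₁, y₂} : Set W) ⊆ T.neighborSet y ∩ S := by
          rintro z (rfl | rfl | rfl)
          · exact ⟨h.symm, hS₁ z (by simp)⟩
          · exact ⟨h₁, hS₁ z (by simp)⟩
          · exact ⟨h₂, hS₂ z (by simp)⟩
        have hcard : ({q, y₁, y₂} : Set W).ncard = 3 := by
          rw [Set.ncard_insert_of_notMem (by simp [hqy₁, hqy₂]), Set.ncard_pair hy]
        have := Set.ncard_le_ncard hsub (Set.toFinite _)
        have := hdeg y (hS₁ y (by simp))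
        omega

lemma exists_isPath_of_mem_branch {q y z : W} (hz : z ∈ {x | ∃ p : T.Walk y x, q ∉ p.support}) :
    ∃ p : T.Walk y z, p.IsPath ∧ q ∉ p.support := by
  classical
  obtain ⟨p, hp⟩ := hz
  exact ⟨p.bypass, p.bypass_isPath, fun h => hp (p.support_bypass_subset_support h)⟩

end SimpleGraph

namespace IsPathSet

variable {W : Type*} {T : SimpleGraph W} {S S' : Set W}

lemma support_subset_union (hT : T.IsAcyclic) (hS : IsPathSet T S) (hS' : IsPathSet T S')
    (hSS' : (S ∩ S').Nonempty) {x y : W} (hx : x ∈ S) (hy : y ∈ S') {p : T.Walk x y}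
    (hp : p.IsPath) : ∀ z ∈ p.support, z ∈ S ∨ z ∈ S' := by
  obtain ⟨c, hcS, hcS'⟩ := hSS'
  obtain ⟨r, hr⟩ := hS.2.1 x hx c hcS
  obtain ⟨r', hr'⟩ := hS'.2.1 c hcS' y hy
  intro z hz
  rcases (mem_support_append_iff _ _).mp (hT.support_subset_of_isPath hp (r.append r') hz)
    with h | h
  exacts [Or.inl (hr z h), Or.inr (hr' z h)]

lemma support_subset (hT : T.IsAcyclic) (hS : IsPathSet T S) {x y : W} (hx : x ∈ S)
    (hy : y ∈ S) {p : T.Walk x y} (hp : p.IsPath) : ∀ z ∈ p.support, z ∈ S :=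
  fun z hz => (hS.support_subset_union hT hS ⟨x, hx, hx⟩ hx hy hp z hz).elim id id

lemma exists_branchAt_superset (hT : T.Connected) (hS : IsPathSet T S) {q : W} (hq : q ∉ S) :
    ∃ B, BranchAt T q B ∧ S ⊆ B := by
  classical
  obtain ⟨x, hx⟩ := hS.1
  obtain ⟨r⟩ := hT q x
  have hr := r.bypass_isPath
  cases hc : r.bypass with
  | nil => exact absurd hx hq
  | @cons _ y _ hqy p =>
    rw [hc, cons_isPath_iff] at hr
    refine ⟨_, ⟨y, hqy, rfl⟩, fun z hz => ?_⟩
    obtain ⟨r', hr'⟩ := hS.2.1 x hx z hz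
    refine ⟨p.append r', fun h => ?_⟩
    rcases (mem_support_append_iff _ _).mp h with h | h
    exacts [hr.2 h, hq (hr' q h)]

end IsPathSet

namespace VPTRep

variable {V W : Type*} {G : SimpleGraph V} {T : SimpleGraph W} (rep : VPTRep G T)

lemma adj_of_mem_isPath_support {x y a : W} {p : T.Walk x y} (hp : p.IsPath)
    (ha : a ∈ p.support) {v w w' : V} (hx : x ∈ rep.path w') (hy : y ∈ rep.path w)
    (hw : G.Adj w' w) (hav : a ∈ rep.path v) (hvw : v ≠ w) (hvw' : v ≠ w') :
    G.Adj v w' ∨ G.Adj v w := by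
  have hmeet := (rep.adj_iff w' w hw.ne).mp hw
  rcases (rep.isPath w').support_subset_union rep.tree.isAcyclic (rep.isPath w) hmeet hx hy hp
    a ha with h | h
  exacts [Or.inl ((rep.adj_iff v w' hvw').mpr ⟨a, hav, h⟩),
    Or.inr ((rep.adj_iff v w hvw).mpr ⟨a, hav, h⟩)]

lemma not_subset_branchAt_of_branchGraph_adj [Finite W] {q : W} {v w : V}
    (hvw : (branchGraph G {x | q ∈ rep.path x}).Adj v w) {B : Set W} (hB : BranchAt T q B)
    (hv : rep.path v ⊆ B) (hw : rep.path w ⊆ B) : False := by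
  obtain ⟨hvC, hwC, hne, hnadj, ⟨u, huC, huv, huw⟩, ⟨v', hv'C, hv'v, hv'w⟩,
    ⟨w', hw'C, hw'w, hw'v⟩⟩ := hvw
  obtain ⟨y, hqy, rfl⟩ := hB
  obtain ⟨a, hau, hav⟩ := (rep.adj_iff u v huv.ne).mp huv
  obtain ⟨b, hbu, hbw⟩ := (rep.adj_iff u w huw.ne).mp huw
  obtain ⟨pa, hpa, hqa⟩ := exists_isPath_of_mem_branch (hv hav)
  obtain ⟨pb, hpb, hqb⟩ := exists_isPath_of_mem_branch (hw hbw)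
  have hpa' := (cons_isPath_iff hqy pa).mpr ⟨hpa, hqa⟩
  have hpb' := (cons_isPath_iff hqy pb).mpr ⟨hpb, hqb⟩
  have hacyc := rep.tree.isAcyclic
  rcases Walk.mem_support_or_mem_support_of_cons (rep.isPath u).2.2 hqy pa pb hpa' hpb'
    ((rep.isPath u).support_subset hacyc huC hau hpa')
    ((rep.isPath u).support_subset hacyc huC hbu hpb') with h | h
  · rcases rep.adj_of_mem_isPath_support hpb' (by simp [h]) hw'C hbw hw'w hav hne
      (fun h => hvC (h ▸ hw'C)) with h' | h'
    exacts [hw'v h'.symm, hnadj h']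
  · rcases rep.adj_of_mem_isPath_support hpa' (by simp [h]) hv'C hav hv'v hbw hne.symm
      (fun h => hwC (h ▸ hv'C)) with h' | h'
    exacts [hv'w h'.symm, hnadj h'.symm]

end VPTRep

theorem stmt0_general {V : Type} {n : ℕ} (G : SimpleGraph V) (T : SimpleGraph (Fin n))
    (rep : VPTRep G T) (C : Set V) (q : Fin n)
    (hq : C = {v : V | q ∈ rep.path v}) :
    (∀ v ∈ branchVerts G C, ∃ B : Set (Fin n), BranchAt T q B ∧ rep.path v ⊆ B) ∧
    (∀ v w : V, (branchGraph G C).Adj v w →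
      ¬ ∃ B : Set (Fin n), BranchAt T q B ∧ rep.path v ⊆ B ∧ rep.path w ⊆ B) := by
  subst hq
  refine ⟨fun v hv => (rep.isPath v).exists_branchAt_superset rep.tree.connected hv.1, ?_⟩
  rintro v w hvw ⟨B, hB, hv, hw⟩
  exact rep.not_subset_branchAt_of_branchGraph_adj hvw hB hv hw

/-- In a VPT-representation `⟨P,T⟩` of `G`, if `C` is a clique of `G` with
`C = C_q`, then (i) the path of every vertex of the branch graph `B(G/C)` is contained
in some branch of `T` at `q`, and (ii) paths of vertices adjacent in `B(G/C)` are not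
contained in a same branch of `T` at `q`. -/
theorem stmt0 {V : Type} [Fintype V] {n : ℕ} (G : SimpleGraph V) (T : SimpleGraph (Fin n))
    (rep : VPTRep G T) (C : Set V) (hC : IsMaxClique G C) (q : Fin n)
    (hq : C = {v : V | q ∈ rep.path v}) :
    (∀ v ∈ branchVerts G C, ∃ B : Set (Fin n), BranchAt T q B ∧ rep.path v ⊆ B) ∧
    (∀ v w : V, (branchGraph G C).Adj v w →
      ¬ ∃ B : Set (Fin n), BranchAt T q B ∧ rep.path v ⊆ B ∧ rep.path w ⊆ B) :=
  stmt0_general G T rep C q hq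
end

section
/- Let G be a finite simple graph admitting an (h,2,1)-representation, where h ≥ 2. Then for every clique C of G, the branch graph B(G/C) is h-colorable. -/
/-!
The paths of the clique `C` pairwise intersect, so by the Helly property of subtrees of a tree
they share a vertex `q`, and by maximality of `C` no path of a vertex outside `C` contains `q`.
Colour each vertex outside `C` by the neighbour of `q` through which its path is reached: at most
`h` colours. Suppose `v`, `w` are adjacent in `B(G/C)` and get the same colour, and let
`u, v', w' ∈ C` witness this. Pick `s ∈ P_u ∩ P_v' ∩ P_v` and `t ∈ P_u ∩ P_w' ∩ P_w` (Helly again)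
and let `m` be the median of `q`, `s`, `t`. If `m = q`, then `q` separates `s` from `t`, so the
colours differ; otherwise `m` has three neighbours in `P_u`, which is impossible for a path.
-/

open SimpleGraph

namespace SimpleGraph

variable {W : Type*} {G T : SimpleGraph W}

theorem Walk.exists_eq_append_forall_mem_eq {u v : W} (p : G.Walk u v) {S : Set W}
    (hv : v ∈ S) :
    ∃ z ∈ S, ∃ (q : G.Walk u z) (r : G.Walk z v), p = q.append r ∧
      ∀ y ∈ q.support, y ∈ S → y = z := by
  induction p with
  | nil => exact ⟨_, hv, nil, nil, rfl, fun y hy _ => by simpa using hy⟩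
  | @cons a b c hab p ih =>
    by_cases ha : a ∈ S
    · exact ⟨a, ha, nil, cons hab p, rfl, fun y hy _ => by simpa using hy⟩
    · obtain ⟨z, hzS, q, r, rfl, hfirst⟩ := ih hv
      refine ⟨z, hzS, cons hab q, r, rfl, fun y hy hyS => ?_⟩
      rcases (by simpa using hy : y = a ∨ y ∈ q.support) with rfl | hy
      · exact absurd hyS ha
      · exact hfirst y hy hyS

theorem Walk.IsPath.append_of_forall_mem_eq {u v w : W} {p : G.Walk u v} {q : G.Walk v w}
    (hp : p.IsPath) (hq : q.IsPath) (h : ∀ x ∈ p.support, x ∈ q.support → x = v) :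
    (p.append q).IsPath := by
  rw [isPath_def, support_append, List.nodup_append]
  refine ⟨hp.support_nodup, hq.support_nodup.tail, fun x hx y hy hxy => ?_⟩
  subst hxy
  have hv : v ∉ q.support.tail := by
    have := hq.support_nodup
    rw [← cons_tail_support] at this
    exact (List.nodup_cons.1 this).1
  exact hv (h x hx (List.mem_of_mem_tail hy) ▸ hy)

namespace IsTree

variable (hT : T.IsTree)

noncomputable def geodesic (x y : W) : T.Walk x y := (hT.existsUnique_path x y).choose

theorem isPath_geodesic (x y : W) : (hT.geodesic x y).IsPath :=
  (hT.existsUnique_path x y).choose_spec.1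

variable {hT}

theorem eq_geodesic {x y : W} {p : T.Walk x y} (hp : p.IsPath) : p = hT.geodesic x y :=
  (hT.existsUnique_path x y).choose_spec.2 p hp

theorem reverse_geodesic (x y : W) : (hT.geodesic x y).reverse = hT.geodesic y x :=
  eq_geodesic (hT.isPath_geodesic x y).reverse

theorem mem_support_geodesic_comm {x y z : W} :
    z ∈ (hT.geodesic x y).support ↔ z ∈ (hT.geodesic y x).support := by
  rw [← reverse_geodesic x y, Walk.support_reverse, List.mem_reverse]

theorem geodesic_eq_append {x y m : W} (hm : m ∈ (hT.geodesic x y).support) :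
    hT.geodesic x y = (hT.geodesic x m).append (hT.geodesic m y) := by
  obtain ⟨p, q, hp, hq, hpq⟩ := (hT.isPath_geodesic x y).mem_support_iff_exists_append.1 hm
  rwa [eq_geodesic hp, eq_geodesic hq] at hpq

theorem support_geodesic_subset_right {x y m : W} (hm : m ∈ (hT.geodesic x y).support) :
    (hT.geodesic m y).support ⊆ (hT.geodesic x y).support := by
  rw [geodesic_eq_append hm]
  exact Walk.support_subset_support_append_right _ _

/-- The first vertex of the geodesic from `b` to `a` lying on the geodesic from `a` to `c` is a
median. -/
theorem exists_median (a b c : W) :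
    ∃ m, m ∈ (hT.geodesic a b).support ∧ m ∈ (hT.geodesic a c).support ∧
      m ∈ (hT.geodesic b c).support := by
  obtain ⟨z, hz, p, r, hpr, hfirst⟩ := (hT.geodesic b a).exists_eq_append_forall_mem_eq
    (S := {y | y ∈ (hT.geodesic a c).support}) (hT.geodesic a c).start_mem_support
  have hp : p.IsPath := (hpr ▸ hT.isPath_geodesic b a).of_append_left
  have hpath : (p.append (hT.geodesic z c)).IsPath :=
    hp.append_of_forall_mem_eq (hT.isPath_geodesic z c)
      fun y hy hyc => hfirst y hy (support_geodesic_subset_right hz hyc)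
  refine ⟨z, mem_support_geodesic_comm.1 ?_, hz, ?_⟩
  · rw [hpr]
    exact Walk.support_subset_support_append_left _ _ p.end_mem_support
  · rw [← eq_geodesic hpath]
    exact Walk.support_subset_support_append_left _ _ p.end_mem_support

def IsConvex (S : Set W) : Prop :=
  ∀ x ∈ S, ∀ y ∈ S, ∀ z ∈ (hT.geodesic x y).support, z ∈ S

theorem isConvex_of_forall_exists_walk {S : Set W}
    (hS : ∀ x ∈ S, ∀ y ∈ S, ∃ p : T.Walk x y, ∀ z ∈ p.support, z ∈ S) : hT.IsConvex S := by
  classical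
  intro x hx y hy z hz
  obtain ⟨p, hp⟩ := hS x hx y hy
  rw [← eq_geodesic p.bypass_isPath] at hz
  exact hp z (p.support_bypass_subset_support hz)

theorem IsConvex.inter {S₁ S₂ : Set W} (h₁ : hT.IsConvex S₁) (h₂ : hT.IsConvex S₂) :
    hT.IsConvex (S₁ ∩ S₂) :=
  fun x hx y hy z hz => ⟨h₁ x hx.1 y hy.1 z hz, h₂ x hx.2 y hy.2 z hz⟩

theorem helly_three {S₁ S₂ S₃ : Set W}
    (h₁ : hT.IsConvex S₁) (h₂ : hT.IsConvex S₂) (h₃ : hT.IsConvex S₃)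
    (h₁₂ : (S₁ ∩ S₂).Nonempty) (h₁₃ : (S₁ ∩ S₃).Nonempty) (h₂₃ : (S₂ ∩ S₃).Nonempty) :
    (S₁ ∩ S₂ ∩ S₃).Nonempty := by
  obtain ⟨a, ha₁, ha₂⟩ := h₁₂
  obtain ⟨b, hb₁, hb₃⟩ := h₁₃
  obtain ⟨c, hc₂, hc₃⟩ := h₂₃
  obtain ⟨m, hab, hac, hbc⟩ := hT.exists_median a b c
  exact ⟨m, ⟨h₁ a ha₁ b hb₁ m hab, h₂ a ha₂ c hc₂ m hac⟩, h₃ b hb₃ c hc₃ m hbc⟩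

theorem helly_theorem {ι : Type*} {F : ι → Set W} {s : Finset ι}
    (h_convex : ∀ i ∈ s, hT.IsConvex (F i))
    (h_inter : ∀ i ∈ s, ∀ j ∈ s, (F i ∩ F j).Nonempty) :
    (⋂ i ∈ s, F i).Nonempty := by
  classical
  rcases s.eq_empty_or_nonempty with rfl | hs
  · exact ⟨hT.nonempty.some, by simp⟩
  induction hs using Finset.Nonempty.cons_induction generalizing F with
  | singleton i => simpa using h_inter i (by simp) i (by simp)
  | cons i s hi hs ih =>
    obtain ⟨q, hq⟩ := ih (F := fun j => F j ∩ F i)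
      (fun j hj => (h_convex j (by simp [hj])).inter (h_convex i (by simp)))
      (fun j hj k hk => (helly_three (h_convex j (by simp [hj])) (h_convex k (by simp [hk]))
        (h_convex i (by simp)) (h_inter j (by simp [hj]) k (by simp [hk]))
        (h_inter j (by simp [hj]) i (by simp)) (h_inter k (by simp [hk]) i (by simp))).mono
          fun x hx => ⟨⟨hx.1.1, hx.2⟩, hx.1.2, hx.2⟩)
    simp only [Set.mem_iInter] at hq
    obtain ⟨j, hj⟩ := hs
    refine ⟨q, ?_⟩
    simp only [Finset.cons_eq_insert, Finset.mem_insert, Set.mem_iInter]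
    rintro k (rfl | hk)
    exacts [(hq j hj).2, (hq k hk).1]

variable (hT) in
/-- Junk value: `x` itself when `x = y`. -/
noncomputable def towards (x y : W) : W := (hT.geodesic x y).snd

theorem adj_towards {x y : W} (hxy : x ≠ y) : T.Adj x (hT.towards x y) :=
  Walk.adj_snd (Walk.not_nil_of_ne hxy)

theorem towards_mem_support {x y : W} : hT.towards x y ∈ (hT.geodesic x y).support :=
  Walk.getVert_mem_support _ _

theorem towards_eq_of_mem_support {x y m : W} (hm : m ∈ (hT.geodesic x y).support)
    (hxm : x ≠ m) : hT.towards x y = hT.towards x m := by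
  have hlen : 1 ≤ (hT.geodesic x m).length :=
    Walk.not_nil_iff_lt_length.1 (Walk.not_nil_of_ne hxm)
  rw [towards, geodesic_eq_append hm, Walk.snd, Walk.getVert_append]
  split_ifs with h
  · rfl
  · rw [show 1 - (hT.geodesic x m).length = 0 by omega, Walk.getVert_zero, towards, Walk.snd,
      show 1 = (hT.geodesic x m).length by omega, Walk.getVert_length]

theorem IsConvex.towards_eq {S : Set W} (hS : hT.IsConvex S) {q x y : W} (hq : q ∉ S)
    (hx : x ∈ S) (hy : y ∈ S) : hT.towards q x = hT.towards q y := by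
  obtain ⟨m, hqx, hqy, hxy⟩ := hT.exists_median q x y
  have hqm : q ≠ m := fun h => hq (h ▸ hS x hx y hy m hxy)
  rw [towards_eq_of_mem_support hqx hqm, towards_eq_of_mem_support hqy hqm]

theorem towards_ne_towards {x y m : W} (hm : m ∈ (hT.geodesic x y).support) (hmy : m ≠ y) :
    hT.towards m x ≠ hT.towards m y := by
  have hpath := hT.isPath_geodesic x y
  rw [geodesic_eq_append hm] at hpath
  exact hpath.ne_of_mem_support_of_append (adj_towards hmy).ne'
    (mem_support_geodesic_comm.1 towards_mem_support) towards_mem_support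

theorem IsConvex.three_le_ncard_neighborSet_inter [Finite W] {S : Set W} (hS : hT.IsConvex S)
    {x y z m : W} (hx : x ∈ S) (hy : y ∈ S) (hz : z ∈ S)
    (hxy : m ∈ (hT.geodesic x y).support) (hxz : m ∈ (hT.geodesic x z).support)
    (hyz : m ∈ (hT.geodesic y z).support) (hmx : m ≠ x) (hmy : m ≠ y) (hmz : m ≠ z) :
    3 ≤ (T.neighborSet m ∩ S).ncard := by
  have hm : m ∈ S := hS y hy z hz m hyz
  have hsub : {hT.towards m x, hT.towards m y, hT.towards m z} ⊆ T.neighborSet m ∩ S := by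
    rintro w (rfl | rfl | rfl)
    exacts [⟨adj_towards hmx, hS m hm x hx _ towards_mem_support⟩,
      ⟨adj_towards hmy, hS m hm y hy _ towards_mem_support⟩,
      ⟨adj_towards hmz, hS m hm z hz _ towards_mem_support⟩]
  have hcard : ({hT.towards m x, hT.towards m y, hT.towards m z} : Set W).ncard = 3 := by
    rw [Set.ncard_insert_of_notMem, Set.ncard_pair (towards_ne_towards hyz hmz)]
    rintro (h | h)
    exacts [towards_ne_towards hxy hmy h, towards_ne_towards hxz hmz h]
  exact hcard ▸ Set.ncard_le_ncard hsub (Set.toFinite _)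

end IsTree

end SimpleGraph

namespace VPTRep

variable {V W : Type*} {G : SimpleGraph V} {T : SimpleGraph W} (R : VPTRep G T)

theorem isConvex_path (v : V) : R.tree.IsConvex (R.path v) :=
  IsTree.isConvex_of_forall_exists_walk (R.isPath v).2.1

theorem inter_nonempty_of_adj {u v : V} (h : G.Adj u v) : (R.path u ∩ R.path v).Nonempty :=
  (R.adj_iff u v h.ne).1 h

theorem disjoint_of_not_adj {u v : V} (hne : u ≠ v) (h : ¬G.Adj u v) :
    Disjoint (R.path u) (R.path v) :=
  Set.disjoint_iff_inter_eq_empty.2 <|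
    Set.not_nonempty_iff_eq_empty.1 fun h' => h ((R.adj_iff u v hne).2 h')

theorem exists_mem_path_of_isClique [Finite V] {C : Set V} (hC : G.IsClique C) :
    ∃ q, ∀ c ∈ C, q ∈ R.path c := by
  obtain ⟨q, hq⟩ := R.tree.helly_theorem (F := R.path) (s := C.toFinite.toFinset)
    (fun c _ => R.isConvex_path c) fun c hc c' hc' => by
      rw [Set.Finite.mem_toFinset] at hc hc'
      obtain rfl | hne := eq_or_ne c c'
      · simpa using (R.isPath c).1
      · exact R.inter_nonempty_of_adj (hC hc hc' hne)
  simp only [Set.mem_iInter, Set.Finite.mem_toFinset] at hq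
  exact ⟨q, hq⟩

theorem mem_of_mem_path {C : Set V} (hC : IsMaxClique G C) {q : W}
    (hq : ∀ c ∈ C, q ∈ R.path c) {v : V} (hv : q ∈ R.path v) : v ∈ C := by
  have hclique : G.IsClique (insert v C) :=
    hC.1.insert fun c hc hne => (R.adj_iff v c hne).2 ⟨q, hv, hq c hc⟩
  exact hC.2 _ hclique (Set.subset_insert v C) ▸ Set.mem_insert v C

theorem towards_ne_of_branchGraph_adj [Finite W] {C : Set V} {q : W}
    (hq : ∀ c ∈ C, q ∈ R.path c) {v w : V} (hvw : (branchGraph G C).Adj v w)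
    (hv : q ∉ R.path v) (hw : q ∉ R.path w) {x y : W} (hx : x ∈ R.path v) (hy : y ∈ R.path w) :
    R.tree.towards q x ≠ R.tree.towards q y := by
  obtain ⟨hvC, hwC, -, -, ⟨u, hu, huv, huw⟩, ⟨v', hv', hv'v, hv'w⟩, ⟨w', hw', hw'w, hw'v⟩⟩ := hvw
  have hconv := R.isConvex_path
  obtain ⟨s, ⟨hsu, hsv'⟩, hsv⟩ := IsTree.helly_three (hconv u) (hconv v') (hconv v)
    ⟨q, hq u hu, hq v' hv'⟩ (R.inter_nonempty_of_adj huv) (R.inter_nonempty_of_adj hv'v)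
  obtain ⟨t, ⟨htu, htw'⟩, htw⟩ := IsTree.helly_three (hconv u) (hconv w') (hconv w)
    ⟨q, hq u hu, hq w' hw'⟩ (R.inter_nonempty_of_adj huw) (R.inter_nonempty_of_adj hw'w)
  have hv'w := R.disjoint_of_not_adj (ne_of_mem_of_not_mem hv' hwC) hv'w
  have hw'v := R.disjoint_of_not_adj (ne_of_mem_of_not_mem hw' hvC) hw'v
  intro hxy
  have hst : R.tree.towards q s = R.tree.towards q t := by
    rw [(hconv v).towards_eq hv hsv hx, hxy, (hconv w).towards_eq hw hy htw]
  obtain ⟨m, hqs, hqt, hst'⟩ := R.tree.exists_median q s t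
  have hmv : m ∉ R.path v := Set.disjoint_left.1 hw'v (hconv w' q (hq w' hw') t htw' m hqt)
  have hmw : m ∉ R.path w := Set.disjoint_left.1 hv'w (hconv v' q (hq v' hv') s hsv' m hqs)
  have hms : m ≠ s := fun h => hmv (h ▸ hsv)
  have hmt : m ≠ t := fun h => hmw (h ▸ htw)
  obtain rfl | hmq := eq_or_ne m q
  · exact IsTree.towards_ne_towards hst' hmt hst
  · have := (hconv u).three_le_ncard_neighborSet_inter (hq u hu) hsu htu hqs hqt hst' hmq hms hmt
    have := (R.isPath u).2.2 m (hconv u s hsu t htu m hst')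
    omega

end VPTRep

/-- If `G` admits an `(h,2,1)`-representation with `h ≥ 2`, then for
every clique `C` of `G` the branch graph `B(G/C)` is `h`-colorable. -/
theorem stmt4 {V : Type} [Fintype V] (G : SimpleGraph V) (h : ℕ) (hh : 2 ≤ h)
    (hG : MemH21 G h) :
    ∀ C : Set V, IsMaxClique G C → (branchGraph G C).Colorable h := by
  classical
  intro C hC
  obtain ⟨n, T, R, hdeg⟩ := hG
  obtain ⟨q, hq⟩ := R.exists_mem_path_of_isClique hC.1
  have hqC : ∀ v ∉ C, q ∉ R.path v := fun v hv hqv => hv (R.mem_of_mem_path hC hq hqv)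
  obtain ⟨e⟩ : Nonempty (T.neighborSet q ↪ Fin h) := Function.Embedding.nonempty_of_card_le <| by
    rw [Fintype.card_fin, ← Nat.card_eq_fintype_card, Nat.card_coe_set_eq]
    exact hdeg q
  let color (v : V) : Fin h := if hv : q ∈ R.path v then ⟨0, by omega⟩ else
    e ⟨R.tree.towards q (R.isPath v).1.some,
      R.tree.adj_towards fun hq' => hv (hq' ▸ (R.isPath v).1.some_mem)⟩
  refine ⟨Coloring.mk color fun {v w} hvw => ?_⟩
  have hv := hqC v hvw.1
  have hw := hqC w hvw.2.1
  intro heq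
  simp only [color, dif_neg hv, dif_neg hw] at heq
  exact R.towards_ne_of_branchGraph_adj hq hvw hv hw (R.isPath v).1.some_mem
    (R.isPath w).1.some_mem (congrArg Subtype.val (e.injective heq))
end

section
/- If G belongs to the class SVS, then for every clique C of G the branch graph B(G/C) is a perfect graph. -/
open SimpleGraph

/-- The cycle graph `Cₙ` on `Fin n` (a cycle for `n ≥ 3`): `i` is adjacent to
`i ± 1 (mod n)`. -/
def cycleG (n : ℕ) : SimpleGraph (Fin n) :=
  SimpleGraph.fromRel (fun i j => (j : ℕ) = ((i : ℕ) + 1) % n)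

/-- The `n`-sun `Sₙ` (for `n ≥ 4`): the split graph on `Fin n ⊕ Fin n` whose central
clique is `{Sum.inr i}` (the vertices `vᵢ`) and whose stable set is `{Sum.inl i}`
(the vertices `sᵢ`), with `sᵢ` adjacent exactly to `vᵢ` and `v_{i+1 (mod n)}`. -/
def sunG (n : ℕ) : SimpleGraph (Fin n ⊕ Fin n) :=
  SimpleGraph.fromRel (fun a b =>
    match a, b with
    | Sum.inr _, Sum.inr _ => True
    | Sum.inl i, Sum.inr j => (j : ℕ) = (i : ℕ) ∨ (j : ℕ) = ((i : ℕ) + 1) % n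
    | _, _ => False)
/-- A split graph `G` with split partition `(S,K)` belongs to the class SVS if it is
VPT, every vertex of `K` has at most two neighbors in `S`, and whenever `S_k` with
`k ∈ {4} ∪ {2m+1 : m ≥ 2}` is induced in `G`, some vertex of `K` is adjacent to two
non-consecutive vertices of the stable set of that `S_k`. -/
def InSVS {V : Type*} (G : SimpleGraph V) (S K : Set V) : Prop :=
  IsSplitPartition G S K ∧ IsVPT G ∧
  (∀ v ∈ K, (G.neighborSet v ∩ S).ncard ≤ 2) ∧
  (∀ k : ℕ, (k = 4 ∨ ∃ m : ℕ, 2 ≤ m ∧ k = 2 * m + 1) →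
    ∀ f : sunG k ↪g G, ∃ v ∈ K, ∃ i j : Fin k,
      (i : ℕ) ≠ (j : ℕ) ∧ ((i : ℕ) + 1) % k ≠ (j : ℕ) ∧ ((j : ℕ) + 1) % k ≠ (i : ℕ) ∧
      G.Adj v (f (Sum.inl i)) ∧ G.Adj v (f (Sum.inl j)))

/-- A graph is perfect iff it has no induced odd cycle of length at least 5 and no
induced complement of an odd cycle of length at least 5 (strong perfect graph
theorem characterization). -/
def IsPerfectGraph {V : Type*} (H : SimpleGraph V) : Prop :=
  ∀ m : ℕ, 2 ≤ m →
    ¬ Nonempty (cycleG (2 * m + 1) ↪g H) ∧ ¬ Nonempty ((cycleG (2 * m + 1))ᶜ ↪g H)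

/-!
If the clique `C` contains a stable vertex `s`, then `s` is one of the at most two stable
neighbours of every central vertex of `C`, so no edge of `B(G/C)` joins two stable vertices; no
edge joins two central ones either, hence `B(G/C)` is bipartite and has no odd hole or antihole.

Otherwise `C = K`. An induced cycle `x₀ … x_{k-1}` of `B(G/K)` consists of stable vertices, and
each edge `xᵢ x_{i+1}` is witnessed by a central vertex `wᵢ` whose stable neighbours are exactly
`xᵢ, x_{i+1}`; the `xᵢ` and `wᵢ` span an induced `k`-sun. For `k = 4` or odd `k ≥ 5` the SVS
condition yields a central vertex adjacent to two non-consecutive `xᵢ, xⱼ`, and this makes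
`xᵢ xⱼ` a chord. So `B(G/K)` has neither an induced `C₄` nor an odd hole, and therefore no odd
antihole either: `C̄₅ ≅ C₅`, and `C̄ₖ` contains an induced `C₄` for `k ≥ 7`.
-/

theorem Fin.val_eq_val_add_one_mod_iff {n : ℕ} [NeZero n] {i j : Fin n} :
    (j : ℕ) = ((i : ℕ) + 1) % n ↔ j = i + 1 := by
  rw [Fin.ext_iff, Fin.val_add, Fin.val_one', Nat.add_mod_mod]

section CycleG

variable {n : ℕ}

theorem cycleG_adj_iff_val {i j : Fin n} :
    (cycleG n).Adj i j ↔ i ≠ j ∧ ((j : ℕ) = (i + 1) % n ∨ (i : ℕ) = (j + 1) % n) := by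
  simp only [cycleG, fromRel_adj]

theorem cycleG_adj [NeZero n] {i j : Fin n} :
    (cycleG n).Adj i j ↔ i ≠ j ∧ (j = i + 1 ∨ i = j + 1) := by
  simp only [cycleG_adj_iff_val, Fin.val_eq_val_add_one_mod_iff]

instance (n : ℕ) : DecidableRel (cycleG n).Adj :=
  fun _ _ => decidable_of_iff' _ cycleG_adj_iff_val

theorem cycleG_eq_cycleGraph : ∀ n, cycleG n = cycleGraph n
  | 0 => by ext i; exact i.elim0
  | 1 => by ext i j; simp [Subsingleton.elim i j]
  | n + 2 => by
    ext i j
    rw [cycleG_adj, cycleGraph_adj, sub_eq_iff_eq_add', sub_eq_iff_eq_add', or_comm]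
    refine ⟨And.right, fun h => ⟨?_, h⟩⟩
    rintro rfl
    simp at h

theorem not_colorable_two_cycleG (hn : 3 ≤ n) (hodd : Odd n) : ¬ (cycleG n).Colorable 2 := by
  rw [cycleG_eq_cycleGraph, ← chromaticNumber_le_iff_colorable,
    chromaticNumber_cycleGraph_of_odd n (by omega) hodd]
  decide

open Fin.CommRing in
def cycleGDoubleHom [NeZero n] (hn : 4 ≤ n) : cycleG n →g (cycleG n)ᶜ where
  toFun i := 2 * i
  map_rel' {i j} h := by
    wlog hij : j = i + 1 generalizing i j
    · exact (this h.symm ((cycleG_adj.mp h).2.resolve_left hij)).symm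
    subst hij
    have h2 : (2 : Fin n) ≠ 0 := by simp [Fin.ext_iff, Nat.mod_eq_of_lt (show 2 < n by omega)]
    have h21 : (2 : Fin n) ≠ 1 := by
      simp [Fin.ext_iff, Nat.mod_eq_of_lt (show 2 < n by omega),
        Nat.mod_eq_of_lt (show 1 < n by omega)]
    have h3 : (3 : Fin n) ≠ 0 := by simp [Fin.ext_iff, Nat.mod_eq_of_lt (show 3 < n by omega)]
    rw [compl_adj, cycleG_adj, show 2 * (i + 1) = 2 * i + 2 by ring,
      show 2 * i + 2 + 1 = 2 * i + 3 by ring]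
    simp [h2, h21, h3]

open Fin.CommRing in
def cycleGFiveEmbeddingCompl : cycleG 5 ↪g (cycleG 5)ᶜ where
  toFun i := 2 * i
  inj' := by decide
  map_rel_iff' := by decide

def pathGraphEmbeddingCycleG {m : ℕ} (h : m < n) : pathGraph m ↪g cycleG n where
  toEmbedding := Fin.castLEEmb h.le
  map_rel_iff' {i j} := by
    have := i.isLt; have := j.isLt
    simp only [cycleG_adj_iff_val, pathGraph_adj, Fin.castLEEmb_apply, Fin.val_castLE, ne_eq,
      Nat.mod_eq_of_lt (show (i : ℕ) + 1 < n by omega),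
      Nat.mod_eq_of_lt (show (j : ℕ) + 1 < n by omega), Fin.ext_iff]
    omega

def cycleGFourEmbeddingComplPathGraph : cycleG 4 ↪g (pathGraph 5)ᶜ where
  toFun := ![0, 3, 1, 4]
  inj' := by decide
  map_rel_iff' := by
    intro i j
    simp only [compl_adj, pathGraph_adj, Function.Embedding.coeFn_mk]
    revert i j
    decide

end CycleG

section Sun

variable {n : ℕ}

theorem sunG_not_adj_inl_inl (i j : Fin n) : ¬ (sunG n).Adj (.inl i) (.inl j) := by
  simp [sunG]

theorem sunG_adj_inr_inr {i j : Fin n} : (sunG n).Adj (.inr i) (.inr j) ↔ i ≠ j := by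
  simp [sunG]

theorem sunG_adj_inl_inr [NeZero n] {i j : Fin n} :
    (sunG n).Adj (.inl i) (.inr j) ↔ j = i ∨ j = i + 1 := by
  simp [sunG, Fin.val_eq_val_add_one_mod_iff, Fin.ext_iff]

end Sun

theorem IsPerfectGraph.of_colorable_two {W : Type*} {H : SimpleGraph W} (h : H.Colorable 2) :
    IsPerfectGraph H := fun m hm =>
  have hodd := not_colorable_two_cycleG (n := 2 * m + 1) (by omega) (odd_two_mul_add_one m)
  ⟨fun ⟨f⟩ => hodd (h.of_hom f.toHom),
    fun ⟨f⟩ => hodd (h.of_hom (f.toHom.comp (cycleGDoubleHom (by omega))))⟩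

theorem IsPerfectGraph.of_isEmpty_cycleG_embedding {W : Type*} {H : SimpleGraph W}
    (h4 : IsEmpty (cycleG 4 ↪g H)) (hodd : ∀ m, 2 ≤ m → IsEmpty (cycleG (2 * m + 1) ↪g H)) :
    IsPerfectGraph H := by
  refine fun m hm => ⟨fun ⟨f⟩ => (hodd m hm).false f, fun ⟨f⟩ => ?_⟩
  obtain rfl | hm3 := eq_or_lt_of_le hm
  · exact (hodd 2 le_rfl).false (cycleGFiveEmbeddingCompl.trans f)
  · exact h4.false (cycleGFourEmbeddingComplPathGraph.trans
      ((Embedding.complEquiv (pathGraphEmbeddingCycleG (by omega))).trans f))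

theorem Set.eq_pair_of_ncard_le_two {α : Type*} {A : Set α} (hA : A.Finite) (h : A.ncard ≤ 2)
    {a b : α} (ha : a ∈ A) (hb : b ∈ A) (hab : a ≠ b) : A = {a, b} := by
  have hsub : {a, b} ⊆ A := Set.insert_subset ha (Set.singleton_subset_iff.mpr hb)
  exact (Set.eq_of_subset_of_ncard_le hsub (by rwa [Set.ncard_pair hab]) hA).symm

section Split

variable {V : Type*} {G : SimpleGraph V} {S K : Set V}

theorem IsSplitPartition.mem_right_of_notMem_left (hsp : IsSplitPartition G S K) {v : V}
    (hv : v ∉ S) : v ∈ K :=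
  (hsp.1 v).resolve_left hv

theorem IsSplitPartition.notMem_left_of_mem_right (hsp : IsSplitPartition G S K) {v : V}
    (hv : v ∈ K) : v ∉ S :=
  fun h => hsp.2.1.notMem_of_mem_left h hv

theorem IsSplitPartition.mem_left_of_notMem_right (hsp : IsSplitPartition G S K) {v : V}
    (hv : v ∉ K) : v ∈ S :=
  (hsp.1 v).resolve_right hv

theorem branchGraph_adj_mem_iff_not_mem [Finite V] (hsp : IsSplitPartition G S K)
    (hb : ∀ u ∈ K, (G.neighborSet u ∩ S).ncard ≤ 2) {C : Set V} (hC : G.IsClique C) {s : V}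
    (hsC : s ∈ C) (hsS : s ∈ S) {x y : V} (hxy : (branchGraph G C).Adj x y) :
    x ∈ S ↔ y ∉ S := by
  obtain ⟨hxC, hyC, hxy, hnadj, ⟨u, huC, hux, huy⟩, -⟩ := hxy
  refine ⟨fun hx hy => ?_, fun hy => by_contra fun hx =>
    hnadj (hsp.2.2.2 (hsp.mem_right_of_notMem_left hx) (hsp.mem_right_of_notMem_left hy) hxy)⟩
  -- otherwise `u` has the three neighbours `s`, `x`, `y` in `S`
  have huK := hsp.mem_right_of_notMem_left fun hu => hsp.2.2.1 u hu x hx hux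
  have hs : s ∈ G.neighborSet u ∩ S :=
    ⟨hC huC hsC fun h => hsp.notMem_left_of_mem_right huK (h ▸ hsS), hsS⟩
  rw [Set.eq_pair_of_ncard_le_two (Set.toFinite _) (hb u huK) ⟨hux, hx⟩ ⟨huy, hy⟩ hxy] at hs
  rcases hs with rfl | rfl
  exacts [hxC hsC, hyC hsC]

theorem branchGraph_colorable_two [Finite V] (hsp : IsSplitPartition G S K)
    (hb : ∀ u ∈ K, (G.neighborSet u ∩ S).ncard ≤ 2) {C : Set V} (hC : G.IsClique C) {s : V}
    (hsC : s ∈ C) (hsS : s ∈ S) : (branchGraph G C).Colorable 2 := by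
  classical
  refine (Coloring.mk (fun v => decide (v ∈ S)) fun hxy => ?_).colorable
  rw [Ne, decide_eq_decide, branchGraph_adj_mem_iff_not_mem hsp hb hC hsC hsS hxy]
  exact not_iff_self

/-- The sun vertex `v_j` goes to `w (j - 1)`, whose stable neighbours are `g (j - 1)`, `g j`. -/
def sunGEmbedding {n : ℕ} [NeZero n] (hsp : IsSplitPartition G S K) {g w : Fin n → V}
    (hg : g.Injective) (hw : w.Injective) (hgS : ∀ i, g i ∈ S) (hwK : ∀ i, w i ∈ K)
    (hadj : ∀ i j, G.Adj (w j) (g i) ↔ i = j ∨ i = j + 1) : sunG n ↪g G where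
  toFun := Sum.elim g fun j => w (j - 1)
  inj' := by
    rintro (i | i) (j | j) h <;> simp only [Sum.elim_inl, Sum.elim_inr] at h
    · exact congrArg _ (hg h)
    · exact (hsp.notMem_left_of_mem_right (hwK _) (h ▸ hgS i)).elim
    · exact (hsp.notMem_left_of_mem_right (hwK _) (h.symm ▸ hgS j)).elim
    · exact congrArg _ (sub_left_injective (hw h))
  map_rel_iff' {a b} := by
    rcases a with i | i <;> rcases b with j | j
    · exact iff_of_false (hsp.2.2.1 _ (hgS i) _ (hgS j)) (sunG_not_adj_inl_inl i j)
    · change G.Adj (g i) (w (j - 1)) ↔ _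
      rw [G.adj_comm, hadj, sunG_adj_inl_inr, sub_add_cancel, eq_sub_iff_add_eq, or_comm, eq_comm,
        @eq_comm _ (i + 1)]
    · change G.Adj (w (i - 1)) (g j) ↔ _
      rw [hadj, adj_comm, sunG_adj_inl_inr, sub_add_cancel, eq_sub_iff_add_eq, or_comm, eq_comm,
        @eq_comm _ (j + 1)]
    · change G.Adj (w (i - 1)) (w (j - 1)) ↔ _
      rw [sunG_adj_inr_inr]
      exact ⟨fun h e => h.ne (by rw [e]),
        fun h => hsp.2.2.2 (hwK _) (hwK _) (hw.ne (sub_left_injective.ne h))⟩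

end Split

section Cycle

variable {V : Type*} {G : SimpleGraph V} {S K : Set V} [Finite V] {k : ℕ}

theorem exists_centers_of_cycleG_embedding [NeZero k] (hsp : IsSplitPartition G S K)
    (hb : ∀ u ∈ K, (G.neighborSet u ∩ S).ncard ≤ 2) (hk : 3 ≤ k)
    (f : cycleG k ↪g branchGraph G K) :
    (∀ i, f i ∈ S) ∧ ∃ w : Fin k → V, w.Injective ∧ (∀ i, w i ∈ K) ∧
      ∀ i j, G.Adj (w j) (f i) ↔ i = j ∨ i = j + 1 := by
  have h1 : (1 : Fin k) ≠ 0 := by simp [Fin.ext_iff, Nat.mod_eq_of_lt (show 1 < k by omega)]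
  have h2 : (1 + 1 : Fin k) ≠ 0 := by
    rw [Ne, Fin.ext_iff, Fin.val_add, Fin.val_one', Nat.mod_eq_of_lt (show 1 < k by omega),
      Nat.mod_eq_of_lt (show 1 + 1 < k by omega)]
    simp
  have hadj (i : Fin k) : (branchGraph G K).Adj (f i) (f (i + 1)) :=
    f.map_rel_iff.mpr (cycleG_adj.mpr ⟨by simpa using h1.symm, .inl rfl⟩)
  have hS (i : Fin k) : f i ∈ S := hsp.mem_left_of_notMem_right (hadj i).1
  choose w hwK hwf using fun i => (hadj i).2.2.2.2.1
  have hwadj (i j : Fin k) : G.Adj (w j) (f i) ↔ i = j ∨ i = j + 1 := by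
    have hN := Set.eq_pair_of_ncard_le_two (Set.toFinite _) (hb _ (hwK j))
      ⟨(hwf j).1, hS j⟩ ⟨(hwf j).2, hS _⟩ (hadj j).2.2.1
    have hmem : f i ∈ G.neighborSet (w j) ∩ S ↔ G.Adj (w j) (f i) :=
      ⟨And.left, fun h => ⟨h, hS i⟩⟩
    rw [← hmem, hN]
    simp
  refine ⟨hS, w, fun a b hab => ?_, hwK, hwadj⟩
  have ha := (hwadj a b).mp (hab ▸ (hwf a).1)
  have ha1 := (hwadj (a + 1) b).mp (hab ▸ (hwf a).2)
  rcases ha with rfl | rfl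
  · rfl
  rcases ha1 with h | h
  · rw [add_assoc] at h
    exact absurd (add_eq_left.mp h) h2
  · exact add_right_cancel h

theorem isEmpty_cycleG_embedding_branchGraph (hG : InSVS G S K)
    (hk : k = 4 ∨ ∃ m, 2 ≤ m ∧ k = 2 * m + 1) : IsEmpty (cycleG k ↪g branchGraph G K) := by
  obtain ⟨hsp, -, hb, hsun⟩ := hG
  have hk3 : 3 ≤ k := by omega
  have : NeZero k := ⟨by omega⟩
  refine ⟨fun f => ?_⟩
  obtain ⟨hS, w, hw, hwK, hwadj⟩ := exists_centers_of_cycleG_embedding hsp hb hk3 f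
  obtain ⟨v, hvK, i, j, hij, hij1, hji1, hvi, hvj⟩ :=
    hsun k hk (sunGEmbedding hsp f.injective hw hS hwK hwadj)
  have hprivate (a b : Fin k) (hab : (a : ℕ) ≠ b) (hba : ((b : ℕ) + 1) % k ≠ a) :
      ∃ u ∈ K, G.Adj u (f a) ∧ ¬ G.Adj u (f b) := by
    refine ⟨w (a - 1), hwK _, (hwadj _ _).mpr (.inr (sub_add_cancel a 1).symm), ?_⟩
    rw [hwadj, sub_add_cancel, eq_sub_iff_add_eq]
    rintro (h | rfl)
    · exact hba (Fin.val_eq_val_add_one_mod_iff.mpr h.symm).symm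
    · exact hab rfl
  refine (cycleG_adj_iff_val.not.mpr ?_) (f.map_rel_iff.mp
    ⟨(hsp.notMem_left_of_mem_right · (hS i)), (hsp.notMem_left_of_mem_right · (hS j)),
      f.injective.ne (Fin.ne_of_val_ne hij), hsp.2.2.1 _ (hS i) _ (hS j), ⟨v, hvK, hvi, hvj⟩,
      hprivate i j hij hji1, hprivate j i hij.symm hij1⟩)
  rintro ⟨-, h | h⟩
  exacts [hij1 h.symm, hji1 h.symm]

end Cycle

/-- If `G` belongs to SVS, then every branch graph of `G` is perfect. -/
theorem stmt12 {V : Type} [Fintype V] (G : SimpleGraph V) (S K : Set V)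
    (hG : InSVS G S K) :
    ∀ C : Set V, IsMaxClique G C → IsPerfectGraph (branchGraph G C) := by
  intro C hC
  by_cases hCS : ∃ s ∈ C, s ∈ S
  · obtain ⟨s, hsC, hsS⟩ := hCS
    exact .of_colorable_two (branchGraph_colorable_two hG.1 hG.2.2.1 hC.1 hsC hsS)
  · obtain rfl : K = C := hC.2 K hG.1.2.2.2 fun v hv =>
      hG.1.mem_right_of_notMem_left fun hvS => hCS ⟨v, hv, hvS⟩
    exact .of_isEmpty_cycleG_embedding (isEmpty_cycleG_embedding_branchGraph hG (.inl rfl))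
      fun m hm => isEmpty_cycleG_embedding_branchGraph hG (.inr ⟨m, hm, rfl⟩)
end
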